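/- arXiv:1803.02388 — 3 statements merged into one kernel-verified Lean document; each statement's English description precedes it below -/
import Mathlib

section
/- If s ∈ ℝ^p has s_j > 0 for some j ∈ [p], or satisfies Σ_{j=1}^p s_j < −1, then sup_{t∈ℝ^p} (s·t − u(t)) = +∞. -/
lemma key_unbounded (p : ℕ) (s : Fin p → ℝ)
    (hs : (∃ j, 0 < s j) ∨ (∑ j, s j) < -1) (M : ℝ) :
    ∃ t : Fin p → ℝ, M < (∑ j, s j * t j) - Real.log (1 + ∑ j, Real.exp (-(t j))) := by
  have hp0 : (0 : ℝ) ≤ p := Nat.cast_nonneg p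
  have hplog : (0 : ℝ) ≤ Real.log (1 + p) := Real.log_nonneg (by linarith)
  rcases hs with ⟨j, hj⟩ | hsum
  · set c : ℝ := max 0 ((M + Real.log (1 + p)) / s j + 1) with hc
    have hc0 : (0 : ℝ) ≤ c := le_max_left _ _
    refine ⟨fun i => if i = j then c else 0, ?_⟩
    have hsum1 : (∑ i, s i * (if i = j then c else 0)) = s j * c := by
      rw [Finset.sum_eq_single j]
      · simp
      · intro b _ hbj; simp [hbj]
      · simp
    have hbound : (∑ i, Real.exp (-(if i = j then c else 0))) ≤ p := by
      calc (∑ i, Real.exp (-(if i = j then c else 0))) ≤ ∑ _i : Fin p, 1 := by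
            refine Finset.sum_le_sum fun i _ => ?_
            rw [Real.exp_le_one_iff]
            split <;> simp [hc0]
        _ = p := by simp
    have hlog : Real.log (1 + ∑ i, Real.exp (-(if i = j then c else 0)))
        ≤ Real.log (1 + p) :=
      Real.log_le_log (by positivity) (by linarith)
    have hcgt : (M + Real.log (1 + p)) / s j < c := by
      have := le_max_right 0 ((M + Real.log (1 + p)) / s j + 1)
      linarith
    have hlt : M + Real.log (1 + p) < s j * c := by
      rw [div_lt_iff₀ hj] at hcgt; linarith
    rw [hsum1]; linarith
  · set A : ℝ := -(∑ j, s j) - 1 with hA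
    have hA0 : 0 < A := by simp only [hA]; linarith
    set c : ℝ := max 0 ((M + Real.log (1 + p)) / A + 1) with hc
    have hc0 : (0 : ℝ) ≤ c := le_max_left _ _
    refine ⟨fun _ => -c, ?_⟩
    have hsum1 : (∑ i, s i * (-c)) = (∑ i, s i) * (-c) := (Finset.sum_mul _ _ _).symm
    have hexp : (∑ _i : Fin p, Real.exp (-(-c))) = p * Real.exp c := by
      simp [Finset.sum_const, mul_comm]
    have hone : (1 : ℝ) ≤ Real.exp c := by
      rw [← Real.exp_zero]; exact Real.exp_le_exp.2 hc0
    have hineq : 1 + p * Real.exp c ≤ (1 + p) * Real.exp c := by nlinarith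
    have hlog : Real.log (1 + p * Real.exp c) ≤ Real.log (1 + p) + c := by
      calc Real.log (1 + p * Real.exp c) ≤ Real.log ((1 + p) * Real.exp c) :=
            Real.log_le_log (by positivity) hineq
        _ = Real.log (1 + p) + c := by
            rw [Real.log_mul (by linarith) (Real.exp_ne_zero _), Real.log_exp]
    have hcgt : (M + Real.log (1 + p)) / A < c := by
      have := le_max_right 0 ((M + Real.log (1 + p)) / A + 1)
      linarith
    have hlt : M + Real.log (1 + p) < c * A := by
      rw [div_lt_iff₀ hA0] at hcgt; linarith
    have hAc : c * A = (∑ i, s i) * (-c) - c := by simp only [hA]; ring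
    rw [hsum1, hexp]
    linarith [hlog, hlt, hAc ▸ hlt]


/-- Let `p ≥ 1` and let `u : ℝ^p → ℝ` be the soft-max function
`u t = log (1 + ∑ j, exp (-(t j)))`. If `s ∈ ℝ^p` has `s j > 0` for some `j`, or
`∑ j, s j < -1`, then the supremum `sup_t (s ⬝ t - u t)` defining the Fenchel
conjugate `u★(s)` equals `+∞`. -/
theorem stmt1 (p : ℕ) (hp : 1 ≤ p) (s : Fin p → ℝ)
    (hs : (∃ j, 0 < s j) ∨ (∑ j, s j) < -1) :
    (⨆ t : Fin p → ℝ,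
        (((∑ j, s j * t j) - Real.log (1 + ∑ j, Real.exp (-(t j))) : ℝ) : EReal))
      = ⊤ := by
  rw [iSup_eq_top]
  intro b hb
  induction b using EReal.rec with
  | bot => exact ⟨0, EReal.bot_lt_coe _⟩
  | coe M =>
    obtain ⟨t, ht⟩ := key_unbounded p s hs M
    exact ⟨t, by exact_mod_cast ht⟩
  | top => exact absurd hb (lt_irrefl _)
end

section
/- For every s ∈ ℝ^p with s_j < 0 for all j ∈ [p] and Σ_{j=1}^p s_j > −1, the supremum defining u★(s) = sup_{t∈ℝ^p} (s·t − u(t)) is attained at the point t★ with coordinates t★_k = log((1 + Σ_{j=1}^p s_j)/(−s_k)), and at this point s_k = −exp(−t★_k)/(1 + Σ_{c=1}^p exp(−t★_c)) for every k ∈ [p]. -/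
lemma key_ineq (a y : ℝ) (ha : 0 < a) (hy : 0 < y) :
    a * Real.log y ≤ a * Real.log a + y - a := by
  have h := Real.log_le_sub_one_of_pos (div_pos hy ha)
  rw [Real.log_div hy.ne' ha.ne'] at h
  have h2 : a * (Real.log y - Real.log a) ≤ a * (y / a - 1) :=
    mul_le_mul_of_nonneg_left h ha.le
  have h3 : a * (y / a - 1) = y - a := by field_simp
  nlinarith [h2, h3]

/-- Let `p ≥ 1` and let `u : ℝ^p → ℝ` be the soft-max function
`u t = log (1 + ∑ j, exp (-(t j)))`. For every `s ∈ ℝ^p` with `s j < 0` for all `j`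
and `∑ j, s j > -1`, the supremum defining `u★(s) = sup_t (s ⬝ t - u t)` is attained
at the point `t★` with coordinates `t★ k = log ((1 + ∑ j, s j) / (-(s k)))`, and at
this point `s k = -(exp (-(t★ k)) / (1 + ∑ c, exp (-(t★ c))))` for every `k`. -/
theorem stmt2 (p : ℕ) (hp : 1 ≤ p) (s : Fin p → ℝ)
    (hs : ∀ j, s j < 0) (hsum : -1 < ∑ j, s j) :
    let tstar : Fin p → ℝ := fun k => Real.log ((1 + ∑ j, s j) / (-(s k)))
    (∀ t : Fin p → ℝ,
        (∑ j, s j * t j) - Real.log (1 + ∑ j, Real.exp (-(t j)))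
          ≤ (∑ j, s j * tstar j) - Real.log (1 + ∑ j, Real.exp (-(tstar j)))) ∧
      ∀ k, s k = -(Real.exp (-(tstar k)) / (1 + ∑ c, Real.exp (-(tstar c)))) := by
  intro tstar
  set S := ∑ j, s j with hS
  have hσ0 : 0 < 1 + S := by linarith
  have hsk : ∀ k, 0 < -(s k) := fun k => by linarith [hs k]
  -- exp(-(tstar k)) = (-(s k))/(1+S)
  have hexp : ∀ k, Real.exp (-(tstar k)) = (-(s k)) / (1 + S) := by
    intro k
    have h1 : -(tstar k) = Real.log (((1 + S) / (-(s k)))⁻¹) := by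
      rw [Real.log_inv]
    rw [h1, inv_div, Real.exp_log (div_pos (hsk k) hσ0)]
  have hsumexp : ∑ c, Real.exp (-(tstar c)) = (-S) / (1 + S) := by
    simp only [hexp, ← Finset.sum_div, ← Finset.sum_neg_distrib, hS]
  have hZstar : 1 + ∑ c, Real.exp (-(tstar c)) = 1 / (1 + S) := by
    rw [hsumexp]; field_simp; ring
  constructor
  · intro t
    set E := ∑ j, Real.exp (-(t j)) with hE
    have hEpos : 0 < E := Finset.sum_pos (fun j _ => Real.exp_pos _)
      (Finset.univ_nonempty_iff.2 (Fin.pos_iff_nonempty.mp hp))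
    have hZpos : 0 < 1 + E := by linarith
    set L := Real.log (1 + E) with hL
    -- per-coordinate key inequality
    have hterm : ∀ j ∈ Finset.univ, (-(s j)) * (-(t j) - L)
        ≤ (-(s j)) * Real.log (-(s j)) + Real.exp (-(t j)) / (1 + E) - (-(s j)) := by
      intro j _
      have h := key_ineq (-(s j)) (Real.exp (-(t j)) / (1 + E)) (hsk j)
        (div_pos (Real.exp_pos _) hZpos)
      rwa [Real.log_div (Real.exp_ne_zero _) hZpos.ne', Real.log_exp] at h
    have hsum1 := Finset.sum_le_sum hterm
    have hLHS : ∑ j, (-(s j)) * (-(t j) - L) = ∑ j, s j * t j + S * L := by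
      have he : ∀ j ∈ Finset.univ, -s j * (-t j - L) = s j * t j + s j * L :=
        fun j _ => by ring
      rw [Finset.sum_congr rfl he, Finset.sum_add_distrib, ← Finset.sum_mul, ← hS]
    have hRHS : ∑ j, ((-(s j)) * Real.log (-(s j)) + Real.exp (-(t j)) / (1 + E) - (-(s j)))
        = (∑ j, (-(s j)) * Real.log (-(s j))) + E / (1 + E) + S := by
      rw [Finset.sum_sub_distrib, Finset.sum_add_distrib, ← Finset.sum_div,
        Finset.sum_neg_distrib, ← hE, ← hS]
      ring
    rw [hLHS, hRHS] at hsum1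
    -- the j = 0 term
    have h0 := key_ineq (1 + S) (1 / (1 + E)) hσ0 (div_pos one_pos hZpos)
    rw [Real.log_div one_ne_zero hZpos.ne', Real.log_one] at h0
    -- combine
    set C := ∑ j, (-(s j)) * Real.log (-(s j)) with hC
    have hcomb : ∑ j, s j * t j - L ≤ C + (1 + S) * Real.log (1 + S) := by
      have hZdiv : E / (1 + E) + 1 / (1 + E) = 1 := by field_simp; ring
      nlinarith
    -- evaluate the RHS of the goal
    have hRHSval : ∑ j, s j * tstar j - Real.log (1 + ∑ j, Real.exp (-(tstar j)))
        = C + (1 + S) * Real.log (1 + S) := by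
      rw [hZstar, Real.log_div one_ne_zero hσ0.ne', Real.log_one]
      have : ∑ j, s j * tstar j = ∑ j, (s j * Real.log (1 + S) + (-(s j)) * Real.log (-(s j))) := by
        apply Finset.sum_congr rfl
        intro j _
        show s j * Real.log ((1 + S) / (-(s j))) = _
        rw [Real.log_div hσ0.ne' (hsk j).ne']
        ring
      rw [this, Finset.sum_add_distrib, ← Finset.sum_mul, ← hS, ← hC]
      ring
    rw [hRHSval]
    exact hcomb
  · intro k
    rw [hexp k, hZstar]
    field_simp
end

section
/- Fix p ≥ 1, an index j₀ ∈ [p], and a ∈ ℝ^p. Then ℓ(a_{j₀}) equals the maximum, over all s ∈ ℝ^p with s_{j₀} ∈ [−1, 0] and s_j = 0 for every j ≠ j₀, of s·a − u★(s); moreover this maximum is attained. -/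
private lemma tangent_ineq (a z : ℝ) :
    Real.log (1 + Real.exp (-a)) - Real.exp (-a) / (1 + Real.exp (-a)) * (z - a)
      ≤ Real.log (1 + Real.exp (-z)) := by
  set b := Real.exp (-a) with hb_def
  have hb : 0 < b := Real.exp_pos _
  have h1b : (0:ℝ) < 1 + b := by linarith
  set σ := b / (1 + b) with hσ_def
  have hσ0 : 0 ≤ σ := by positivity
  have hσ1 : σ ≤ 1 := by rw [hσ_def, div_le_one h1b]; linarith
  have conv := convexOn_exp.2 (Set.mem_univ (0:ℝ)) (Set.mem_univ (-(z-a)))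
      (by linarith : (0:ℝ) ≤ 1 - σ) hσ0 (by ring)
  simp only [smul_eq_mul, mul_zero, zero_add, Real.exp_zero, mul_one] at conv
  have hσb : (1 + b) * σ = b := by rw [hσ_def]; field_simp
  have h2 : b * Real.exp (-(z-a)) = Real.exp (-z) := by
    rw [hb_def, ← Real.exp_add]; ring_nf
  have key : (1 + b) * Real.exp (-(σ * (z - a))) ≤ 1 + Real.exp (-z) := by
    have h1 : (1+b) * ((1-σ) + σ * Real.exp (-(z-a))) = 1 + Real.exp (-z) := by
      rw [← h2]; linear_combination (Real.exp (-(z - a)) - 1) * hσb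
    calc (1+b) * Real.exp (-(σ * (z-a)))
        ≤ (1+b) * ((1-σ) + σ * Real.exp (-(z-a))) := by
          apply mul_le_mul_of_nonneg_left _ (le_of_lt h1b)
          convert conv using 2
          ring
      _ = 1 + Real.exp (-z) := h1
  have hpos : 0 < (1+b) * Real.exp (-(σ * (z-a))) := by positivity
  have hlog := Real.log_le_log hpos key
  rw [Real.log_mul (ne_of_gt h1b) (Real.exp_ne_zero _), Real.log_exp] at hlog
  linarith

private lemma ereal_le_of_forall_sub (x : ℝ) (y : EReal)
    (h : ∀ ε : ℝ, 0 < ε → ((x - ε : ℝ) : EReal) ≤ y) : (x : EReal) ≤ y := by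
  by_contra hlt
  push_neg at hlt
  obtain ⟨r, hr1, hr2⟩ := EReal.lt_iff_exists_real_btwn.mp hlt
  have hrx : r < x := EReal.coe_lt_coe_iff.mp hr2
  have := h (x - r) (sub_pos.mpr hrx)
  simp only [sub_sub_cancel] at this
  exact absurd (lt_of_le_of_lt this hr1) (lt_irrefl _)

/-- Fix `p ≥ 1`, an index `j₀`, and `a ∈ ℝ^p`. Let
`ℓ z = log (1 + exp (-z))` be the log-loss, `u` the soft-max function
`u t = log (1 + ∑ j, exp (-(t j)))`, and `u★` its Fenchel conjugate
(an `EReal`-valued supremum). Then `ℓ (a j₀)` equals the maximum, over all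
`s ∈ ℝ^p` with `s j₀ ∈ [-1, 0]` and `s j = 0` for every `j ≠ j₀`, of
`s ⬝ a - u★ s`; moreover this maximum is attained (`IsGreatest`). -/
theorem stmt4 (p : ℕ) (hp : 1 ≤ p) (j₀ : Fin p) (a : Fin p → ℝ) :
    let ustar : (Fin p → ℝ) → EReal := fun s =>
      ⨆ t : Fin p → ℝ,
        (((∑ j, s j * t j) - Real.log (1 + ∑ j, Real.exp (-(t j))) : ℝ) : EReal)
    IsGreatest
      {v : EReal | ∃ s : Fin p → ℝ,
        (s j₀ ∈ Set.Icc (-1 : ℝ) 0 ∧ ∀ j, j ≠ j₀ → s j = 0) ∧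
        v = ((∑ j, s j * a j : ℝ) : EReal) - ustar s}
      ((Real.log (1 + Real.exp (-(a j₀))) : ℝ) : EReal) := by
  intro ustar
  set a₀ := a j₀ with ha₀
  set L := Real.log (1 + Real.exp (-a₀)) with hL
  set σ := Real.exp (-a₀) / (1 + Real.exp (-a₀)) with hσ
  have hb : 0 < Real.exp (-a₀) := Real.exp_pos _
  have h1b : (0:ℝ) < 1 + Real.exp (-a₀) := by linarith
  have hσ0 : 0 ≤ σ := by rw [hσ]; positivity
  have hσ1 : σ ≤ 1 := by rw [hσ, div_le_one h1b]; linarith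
  -- Lower bound on the conjugate for any s supported at j₀
  have hlow : ∀ s : Fin p → ℝ, (∀ j, j ≠ j₀ → s j = 0) →
      ((s j₀ * a₀ - L : ℝ) : EReal) ≤ ustar s := by
    intro s hs
    apply ereal_le_of_forall_sub
    intro ε hε
    have h1ε : 1 < Real.exp ε := by nlinarith [Real.add_one_le_exp ε]
    set δ := (1 + Real.exp (-a₀)) * (Real.exp ε - 1) with hδ
    have hδpos : 0 < δ := by rw [hδ]; nlinarith
    have hp0 : (0:ℝ) < p := by exact_mod_cast Nat.lt_of_lt_of_le Nat.zero_lt_one hp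
    set M := -Real.log (δ / p) with hM
    set t : Fin p → ℝ := fun j => if j = j₀ then a₀ else M with ht
    have ht0 : t j₀ = a₀ := by simp [ht]
    have hstj : ∑ j, s j * t j = s j₀ * a₀ := by
      rw [Finset.sum_eq_single j₀]
      · rw [ht0]
      · intro j _ hj; rw [hs j hj]; ring
      · intro h; exact absurd (Finset.mem_univ j₀) h
    have hexpM : Real.exp (-M) = δ / p := by
      rw [hM, neg_neg, Real.exp_log (by positivity)]
    have hsum : ∑ j, Real.exp (-(t j)) ≤ Real.exp (-a₀) + δ := by
      rw [← Finset.add_sum_erase _ _ (Finset.mem_univ j₀), ht0]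
      have h2 : ∑ j ∈ Finset.univ.erase j₀, Real.exp (-(t j))
          = ((p - 1 : ℕ) : ℝ) * (δ / p) := by
        rw [Finset.sum_congr rfl (fun j hj => ?_), Finset.sum_const,
          Finset.card_erase_of_mem (Finset.mem_univ _), Finset.card_univ,
          Fintype.card_fin, nsmul_eq_mul]
        rw [show t j = M from if_neg (Finset.mem_erase.mp hj).1, hexpM]
      rw [h2]
      have h3 : ((p - 1 : ℕ) : ℝ) ≤ (p : ℝ) := by exact_mod_cast Nat.sub_le p 1
      have h4 : (0:ℝ) ≤ δ / p := le_of_lt (by positivity)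
      have h5 : (p:ℝ) * (δ / p) = δ := by field_simp
      nlinarith [mul_le_mul_of_nonneg_right h3 h4]
    have hut : Real.log (1 + ∑ j, Real.exp (-(t j))) ≤ L + ε := by
      have hpos : 0 < 1 + ∑ j, Real.exp (-(t j)) := by
        have : (0:ℝ) ≤ ∑ j, Real.exp (-(t j)) :=
          Finset.sum_nonneg fun j _ => (Real.exp_pos _).le
        linarith
      have hle : 1 + ∑ j, Real.exp (-(t j)) ≤ (1 + Real.exp (-a₀)) * Real.exp ε := by
        have : (1 + Real.exp (-a₀)) * Real.exp ε = 1 + Real.exp (-a₀) + δ := by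
          rw [hδ]; ring
        linarith
      calc Real.log (1 + ∑ j, Real.exp (-(t j)))
          ≤ Real.log ((1 + Real.exp (-a₀)) * Real.exp ε) := Real.log_le_log hpos hle
        _ = L + ε := by
            rw [Real.log_mul (ne_of_gt h1b) (Real.exp_ne_zero _), Real.log_exp, hL]
    calc ((s j₀ * a₀ - L - ε : ℝ) : EReal)
        ≤ ((∑ j, s j * t j - Real.log (1 + ∑ j, Real.exp (-(t j))) : ℝ) : EReal) := by
          apply EReal.coe_le_coe_iff.mpr
          rw [hstj]; linarith
      _ ≤ ustar s := le_iSup (fun t : Fin p → ℝ =>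
            (((∑ j, s j * t j) - Real.log (1 + ∑ j, Real.exp (-(t j))) : ℝ) : EReal)) t
  -- The optimal s
  set sstar : Fin p → ℝ := fun j => if j = j₀ then -σ else 0 with hsstar
  have hsj₀ : sstar j₀ = -σ := by simp [hsstar]
  have hssupp : ∀ j, j ≠ j₀ → sstar j = 0 := fun j hj => if_neg hj
  have hsum_sa : ∑ j, sstar j * a j = -σ * a₀ := by
    rw [Finset.sum_eq_single j₀]
    · rw [hsj₀, ha₀]
    · intro j _ hj; rw [hssupp j hj]; ring
    · intro h; exact absurd (Finset.mem_univ j₀) h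
  have hup_t : ∀ t : Fin p → ℝ,
      ∑ j, sstar j * t j - Real.log (1 + ∑ j, Real.exp (-(t j))) ≤ -σ * a₀ - L := by
    intro t
    have h1 : ∑ j, sstar j * t j = -σ * t j₀ := by
      rw [Finset.sum_eq_single j₀]
      · rw [hsj₀]
      · intro j _ hj; rw [hssupp j hj]; ring
      · intro h; exact absurd (Finset.mem_univ j₀) h
    have h2 : Real.exp (-(t j₀)) ≤ ∑ j, Real.exp (-(t j)) :=
      Finset.single_le_sum (fun j _ => (Real.exp_pos (-(t j))).le) (Finset.mem_univ j₀)
    have h3 : Real.log (1 + Real.exp (-(t j₀))) ≤ Real.log (1 + ∑ j, Real.exp (-(t j))) :=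
      Real.log_le_log (by positivity) (by linarith)
    have h4 := tangent_ineq a₀ (t j₀)
    rw [← hσ, ← hL] at h4
    rw [h1]
    nlinarith
  have hustar_eq : ustar sstar = ((-σ * a₀ - L : ℝ) : EReal) := by
    apply le_antisymm
    · exact iSup_le fun t => EReal.coe_le_coe_iff.mpr (hup_t t)
    · have := hlow sstar hssupp
      rwa [hsj₀] at this
  constructor
  · refine ⟨sstar, ⟨⟨?_, hssupp⟩, ?_⟩⟩
    · rw [hsj₀]
      exact ⟨by linarith, by linarith⟩
    · rw [hustar_eq, hsum_sa, ← EReal.coe_sub]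
      norm_num
  · rintro v ⟨s, ⟨⟨hs1, hs2⟩, rfl⟩⟩
    have h1 : ∑ j, s j * a j = s j₀ * a₀ :=
      Finset.sum_eq_single j₀ (fun j _ hj => by rw [hs2 j hj]; ring)
        (fun h => absurd (Finset.mem_univ j₀) h)
    calc ((∑ j, s j * a j : ℝ) : EReal) - ustar s
        ≤ ((∑ j, s j * a j : ℝ) : EReal) - ((s j₀ * a₀ - L : ℝ) : EReal) :=
          EReal.sub_le_sub le_rfl (hlow s hs2)
      _ = ((∑ j, s j * a j - (s j₀ * a₀ - L) : ℝ) : EReal) := by rw [← EReal.coe_sub]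
      _ = ((L : ℝ) : EReal) := by rw [h1]; norm_num
end
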